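/- arXiv:2403.13022 — 2 statements merged into one kernel-verified Lean document; each statement's English description precedes it below -/
import Mathlib

section
/- The function g(x) = 1/(x(e^{1/x} − 1)) is strictly monotonically increasing (hence injective) on the interval (0, ∞): for all reals 0 < x < y one has 1/(x(e^{1/x} − 1)) < 1/(y(e^{1/y} − 1)). -/
lemma numer_pos (t : ℝ) (ht : 0 < t) : 0 < (t - 1) * Real.exp t + 1 := by
  rcases le_or_gt 1 t with h | h
  · have : 0 ≤ (t - 1) * Real.exp t :=
      mul_nonneg (by linarith) (Real.exp_pos t).le
    linarith
  · have h1 : -t + 1 < Real.exp (-t) := by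
      have := Real.add_one_lt_exp (x := -t) (by linarith)
      linarith
    have h2 : (1 - t) * Real.exp t < Real.exp (-t) * Real.exp t := by
      apply mul_lt_mul_of_pos_right _ (Real.exp_pos t)
      linarith
    rw [← Real.exp_add] at h2
    simp at h2
    nlinarith [Real.exp_pos t]

lemma F_strictMono : StrictMonoOn (fun t : ℝ => (Real.exp t - 1) / t) (Set.Ioi 0) := by
  apply strictMonoOn_of_deriv_pos (convex_Ioi 0)
  · apply ContinuousOn.div
    · exact (Real.continuous_exp.sub continuous_const).continuousOn
    · exact continuousOn_id
    · intro t ht; exact ne_of_gt ht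
  · intro t ht
    rw [interior_Ioi] at ht
    have ht0 : (0:ℝ) < t := ht
    have hd : HasDerivAt (fun t : ℝ => (Real.exp t - 1) / t)
        ((Real.exp t * t - (Real.exp t - 1) * 1) / t ^ 2) t := by
      exact ((Real.hasDerivAt_exp t).sub_const 1).div (hasDerivAt_id t) (ne_of_gt ht0)
    rw [hd.deriv]
    apply div_pos _ (by positivity)
    have := numer_pos t ht0
    nlinarith

/-- The normalization factor `g(x) = 1/(x(e^{1/x} − 1))` is strictly increasing
on `(0, ∞)`: for all `0 < x < y`,
`1/(x(e^{1/x} − 1)) < 1/(y(e^{1/y} − 1))`. -/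
theorem g_strictMono (x y : ℝ) (hx : 0 < x) (hxy : x < y) :
    1 / (x * (Real.exp (1 / x) - 1)) < 1 / (y * (Real.exp (1 / y) - 1)) := by
  have hy : 0 < y := hx.trans hxy
  have hsx : (0:ℝ) < 1 / x := by positivity
  have hsy : (0:ℝ) < 1 / y := by positivity
  have hlt : 1 / y < 1 / x := one_div_lt_one_div_of_lt hx hxy
  have key : (Real.exp (1 / y) - 1) / (1 / y) < (Real.exp (1 / x) - 1) / (1 / x) :=
    F_strictMono (Set.mem_Ioi.mpr hsy) (Set.mem_Ioi.mpr hsx) hlt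
  have hx' : x * (Real.exp (1 / x) - 1) > 0 := by
    apply mul_pos hx
    have := Real.add_one_lt_exp (x := 1 / x) (ne_of_gt hsx)
    linarith
  have hy' : y * (Real.exp (1 / y) - 1) > 0 := by
    apply mul_pos hy
    have := Real.add_one_lt_exp (x := 1 / y) (ne_of_gt hsy)
    linarith
  apply one_div_lt_one_div_of_lt hy'
  simp only [one_div, div_inv_eq_mul] at key
  simp only [one_div]
  nlinarith
end

section
/- For N = 2, there exists a real p with 0 < p < 1/2 such that S(p) = H(p), where H(p) = −p·log₂ p − (1 − p)·log₂(1 − p) is the base-2 Shannon entropy of the distribution (p, 1 − p) and S(p) = [p(e^{p} − 1) + (1 − p)(e^{1−p} − 1)] / (2(e^{1/2} − 1)) is its syntropy. That is, the entropy and syntropy curves on the simplex N = 2 intersect at an equilibrium point in (0, 1/2). -/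
open Real Set

noncomputable def eqFx (p : ℝ) : ℝ :=
  (p * (Real.exp p - 1) + (1 - p) * (Real.exp (1 - p) - 1)) /
      (2 * (Real.exp (1 / 2) - 1)) -
    (-(p * Real.logb 2 p) - (1 - p) * Real.logb 2 (1 - p))

lemma eqE_bounds : (0.6 : ℝ) < Real.exp (1/2) - 1 ∧ Real.exp (1/2) - 1 < 0.6488 := by
  have h1 := Real.exp_one_lt_d9
  have h2 : Real.exp (1/2) * Real.exp (1/2) = Real.exp 1 := by
    rw [← Real.exp_add]; norm_num
  have h4 := Real.exp_one_gt_d9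
  constructor
  · nlinarith [Real.exp_pos (1/2 : ℝ)]
  · nlinarith [Real.exp_pos (1/2 : ℝ)]

lemma eqFx_cont : ContinuousOn eqFx (Icc (1/8 : ℝ) (1/2)) := by
  apply continuousOn_of_forall_continuousAt
  intro p hp
  simp only [mem_Icc] at hp
  have hp1 : p ≠ 0 := by linarith [hp.1]
  have hp2 : (1 : ℝ) - p ≠ 0 := by linarith [hp.2]
  have c1 : ContinuousAt (fun q : ℝ => Real.log q) p := Real.continuousAt_log hp1
  have c2 : ContinuousAt (fun q : ℝ => Real.log (1 - q)) p :=
    (Real.continuousAt_log hp2).comp (by fun_prop)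
  unfold eqFx
  simp only [Real.logb]
  apply ContinuousAt.sub
  · exact ContinuousAt.div_const (by fun_prop) _
  · apply ContinuousAt.sub
    · exact (continuousAt_id.mul (c1.div_const _)).neg
    · exact (by fun_prop : ContinuousAt (fun q : ℝ => 1 - q) p).mul (c2.div_const _)

lemma eqFx_half : eqFx (1/2) = -(1/2) := by
  have hE := eqE_bounds
  have hne : (2 : ℝ) * (Real.exp (1/2) - 1) ≠ 0 := by nlinarith [hE.1]
  have hlb : Real.logb 2 (1/2 : ℝ) = -1 := by
    rw [show (1/2:ℝ) = 2⁻¹ by norm_num, Real.logb_inv, Real.logb_self_eq_one] <;> norm_num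
  unfold eqFx
  rw [show (1:ℝ) - 1/2 = 1/2 by norm_num, hlb]
  have hne' : Real.exp (1/2) - 1 ≠ 0 := by nlinarith [hE.1]
  field_simp
  ring

lemma eqFx_eighth : 0 < eqFx (1/8) := by
  have hE := eqE_bounds
  have hL := Real.log_two_gt_d9
  have hLpos : (0:ℝ) < Real.log 2 := by linarith
  -- logb 2 (1/8) = -3
  have h18 : Real.logb 2 (1/8 : ℝ) = -3 := by
    rw [show (1/8:ℝ) = ((2:ℝ)^(3:ℕ))⁻¹ by norm_num, Real.logb_inv, Real.logb_pow,
      Real.logb_self_eq_one (by norm_num)]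
    norm_num
  -- bound on logb 2 (7/8)
  have hlog87 : Real.log (8/7 : ℝ) ≤ 1/7 := by
    have := Real.log_le_sub_one_of_pos (show (0:ℝ) < 8/7 by norm_num)
    linarith
  have hlog78 : -(1/7 : ℝ) ≤ Real.log (7/8) := by
    have : Real.log (7/8 : ℝ) = -Real.log (8/7) := by
      rw [show (7/8:ℝ) = (8/7)⁻¹ by norm_num, Real.log_inv]
    linarith [this ▸ neg_le_neg hlog87]
  have hlb78 : -(0.2062 : ℝ) ≤ Real.logb 2 (7/8) := by
    rw [Real.logb]
    have step1 : (-1/7 : ℝ) / Real.log 2 ≤ Real.log (7/8) / Real.log 2 := by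
      gcongr
      · linarith
    have step2 : (-0.2062 : ℝ) ≤ (-1/7 : ℝ) / Real.log 2 := by
      rw [le_div_iff₀ hLpos]; nlinarith
    linarith
  -- lower bounds on exponentials
  have he1 : (9/8 : ℝ) ≤ Real.exp (1/8) := by
    have := Real.add_one_le_exp (1/8 : ℝ); linarith
  have he7 : (15/8 : ℝ) ≤ Real.exp (7/8) := by
    have := Real.add_one_le_exp (7/8 : ℝ); linarith
  unfold eqFx
  rw [show (1:ℝ) - 1/8 = 7/8 by norm_num, h18]
  have hden : (0:ℝ) < 2 * (Real.exp (1/2) - 1) := by linarith [hE.1]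
  have hS : (0.6 : ℝ) ≤ (1/8 * (Real.exp (1/8) - 1) + 7/8 * (Real.exp (7/8) - 1)) /
      (2 * (Real.exp (1/2) - 1)) := by
    rw [le_div_iff₀ hden]
    nlinarith [hE.2]
  have hH : -(1/8 * (-3:ℝ)) - 7/8 * Real.logb 2 (7/8) ≤ 0.5560 := by nlinarith [hlb78]
  linarith

/-- For `N = 2`, the Shannon entropy `H(p) = −p·log₂ p − (1 − p)·log₂(1 − p)` and
the syntropy `S(p) = [p(e^p − 1) + (1 − p)(e^{1−p} − 1)] / (2(e^{1/2} − 1))`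
intersect at an equilibrium point `p ∈ (0, 1/2)`. -/
theorem equilibrium_point_exists :
    ∃ p : ℝ, 0 < p ∧ p < 1 / 2 ∧
      (p * (Real.exp p - 1) + (1 - p) * (Real.exp (1 - p) - 1)) /
          (2 * (Real.exp (1 / 2) - 1)) =
        -(p * Real.logb 2 p) - (1 - p) * Real.logb 2 (1 - p) := by
  have h8 := eqFx_eighth
  have h2 := eqFx_half
  have hsub := intermediate_value_Icc' (show (1/8:ℝ) ≤ 1/2 by norm_num) eqFx_cont
  have h0 : (0:ℝ) ∈ Icc (eqFx (1/2)) (eqFx (1/8)) := by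
    rw [h2]; constructor <;> [norm_num; linarith]
  obtain ⟨p, hp, hfp⟩ := hsub h0
  refine ⟨p, by linarith [hp.1], ?_, ?_⟩
  · rcases lt_or_eq_of_le hp.2 with h | h
    · exact h
    · exfalso; rw [h] at hfp; rw [eqFx_half] at hfp; norm_num at hfp
  · unfold eqFx at hfp; linarith
end
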